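/- Assume statement B(η₀, ε₀, L₀) holds. Then for any independent finitely supported random variables X, Y on G = 𝔽₂ⁿ, there exists a subspace V ⊆ G with H[𝐔_V] ≤ (4/ε₀) L₀ (H[X] + H[Y]) such that, writing π = π_V and letting X₁, X₂, Y₁, Y₂ be mutually independent copies of X, X, Y, Y: (i) H[π(X₁ + X₂ + Y₁ + Y₂)] ≥ (1 − η₀)(H[π(X₁ + X₂)] + H[π(Y₁ + Y₂)]) − 4ε₀ (H[X] + H[Y]), and (ii) H[π(X₁ + X₂ + Y₁ + Y₂)] ≥ (1 − η₀)(H[π(X₁ + Y₂)] + H[π(Y₁ + X₂)]) − 4ε₀ (H[X] + H[Y]). -/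
import Mathlib


open Real Pointwise

noncomputable section

abbrev Fvec (n : ℕ) : Type := Fin n → ZMod 2

/-- Shannon entropy (natural log) of a finitely supported distribution. -/
def ent {A : Type*} (p : A → ℝ) : ℝ := ∑ᶠ a, Real.negMulLog (p a)

/-- `p` is a (finitely supported) probability distribution. -/
def IsDist {A : Type*} (p : A → ℝ) : Prop := (∀ a, 0 ≤ p a) ∧ ∑ᶠ a, p a = 1

/-- Pushforward of a distribution along a map: the distribution of `f(X)` for `X ∼ p`. -/
def push {A B : Type*} (f : A → B) (p : A → ℝ) : B → ℝ := fun b => ∑ᶠ a ∈ f ⁻¹' {b}, p a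

/-- Joint distribution of a pair of independent random variables. -/
def prodDist {A B : Type*} (p : A → ℝ) (q : B → ℝ) : A × B → ℝ := fun z => p z.1 * q z.2

/-- Distribution of `X + Y` for independent `X ∼ p`, `Y ∼ q`. -/
def conv {A : Type*} [AddGroup A] (p q : A → ℝ) : A → ℝ := fun z => ∑ᶠ x, p x * q (z - x)

/-- The distribution of `X` conditioned on `U = b`, where `r` is the joint distribution of `(X, U)`. -/
def fiber {A B : Type*} (r : A × B → ℝ) (b : B) : A → ℝ := fun a => r (a, b) / push Prod.snd r b

/-- Conditional entropy `H[X | U]` of a joint distribution `r` of `(X, U)`. -/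
def condEnt {A B : Type*} (r : A × B → ℝ) : ℝ := ∑ᶠ b, push Prod.snd r b * ent (fiber r b)

/-- Doubling mass `s[X ; Y]` (of independent copies with distributions `p`, `q`). -/
def sDouble {A : Type*} [AddGroup A] (p q : A → ℝ) : ℝ := ent p + ent q - ent (conv p q)

/-- Conditional doubling mass `s[X | U ; Y | W] = 𝔼_{u ∼ U, w ∼ W} s[X_u ; Y_w]`,
where `r1`, `r2` are the joint distributions of `(X, U)` and `(Y, W)`. -/
def sCond {A U W : Type*} [AddGroup A] (r1 : A × U → ℝ) (r2 : A × W → ℝ) : ℝ :=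
  ∑ᶠ u, ∑ᶠ w, push Prod.snd r1 u * push Prod.snd r2 w * sDouble (fiber r1 u) (fiber r2 w)

/-- Conditional mutual information `I[A : B | S]` of a joint distribution of `(A, B, S)`. -/
def condMI {A B S : Type*} (r : A × B × S → ℝ) : ℝ :=
  ent (push (fun z => (z.1, z.2.2)) r) + ent (push (fun z => z.2) r)
    - ent r - ent (push (fun z => z.2.2) r)

/-- Uniform distribution on a set. -/
def unifOn {A : Type*} (s : Set A) : A → ℝ := s.indicator fun _ => (Nat.card s : ℝ)⁻¹

/-- Entropic Ruzsa distance `d[X ; Y]`. -/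
def dRuzsa {A : Type*} [AddGroup A] (p q : A → ℝ) : ℝ := ent (conv p q) - ent p / 2 - ent q / 2

/-- Joint distribution of `(X, X + Y)` for independent `X ∼ p`, `Y ∼ q`. -/
def jointSum {A : Type*} [AddGroup A] (p q : A → ℝ) : A × A → ℝ :=
  push (fun z : A × A => (z.1, z.1 + z.2)) (prodDist p q)

/-- Joint distribution of `(X, π_V(X))`. -/
def selfProj {n : ℕ} (V : Submodule (ZMod 2) (Fvec n)) (p : Fvec n → ℝ) :
    Fvec n × (Fvec n ⧸ V) → ℝ := push (fun x => (x, V.mkQ x)) p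

/-- Joint distribution of independent `(X₁, X₂, Y₁, Y₂)` with `X₁, X₂ ∼ p` and `Y₁, Y₂ ∼ q`. -/
def quad {A : Type*} (p q : A → ℝ) : A × A × A × A → ℝ :=
  fun z => p z.1 * p z.2.1 * q z.2.2.1 * q z.2.2.2

/-- Distribution of `X₁ + ⋯ + X_k` for independent `Xᵢ ∼ p i`. -/
def indepSum {A : Type*} [AddCommGroup A] (k : ℕ) (p : Fin k → A → ℝ) : A → ℝ :=
  push (fun x : Fin k → A => ∑ i, x i) (fun x => ∏ i, p i (x i))

/-- Statement `A(η, L, c)` from the paper. -/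
def StA (η L c : ℝ) : Prop :=
  ∀ (n : ℕ) (p q : Fvec n → ℝ), IsDist p → IsDist q →
    ent (conv p q) ≤ (1 - η) * (ent p + ent q) →
    ∃ V : Submodule (ZMod 2) (Fvec n),
      ent (unifOn (V : Set (Fvec n))) ≤ L * (ent p + ent q) ∧
      ent (push V.mkQ p) + ent (push V.mkQ q) ≤ (1 - c) * (ent p + ent q)

/-- Statement `B(η, ε, L)` from the paper. -/
def StB (η ε L : ℝ) : Prop :=
  ∀ (n : ℕ) (p q : Fvec n → ℝ), IsDist p → IsDist q →
    ∃ V : Submodule (ZMod 2) (Fvec n),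
      ent (unifOn (V : Set (Fvec n))) ≤ L * (ent p + ent q) ∧
      ent (conv (push V.mkQ p) (push V.mkQ q)) ≥
        (1 - η) * (ent (push V.mkQ p) + ent (push V.mkQ q)) - ε * (ent p + ent q)

section Stmt15Aux

variable {A B C : Type*}

lemma ent_eq_sum [Fintype A] (p : A → ℝ) : ent p = ∑ a, Real.negMulLog (p a) :=
  finsum_eq_sum_of_fintype _

lemma push_apply [Fintype A] [DecidableEq B] (f : A → B) (p : A → ℝ) (b : B) :
    push f p b = ∑ a, if f a = b then p a else 0 := by
  have h : f ⁻¹' {b} = ↑(Finset.univ.filter fun a => f a = b) := by ext a; simp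
  rw [push, h, finsum_mem_coe_finset, Finset.sum_filter]

lemma sum_push [Fintype A] [Fintype B] (f : A → B) (p : A → ℝ) :
    ∑ b, push f p b = ∑ a, p a := by
  classical
  simp_rw [push_apply]
  rw [Finset.sum_comm]
  simp

lemma isDist_push [Fintype A] [Fintype B] (f : A → B) {p : A → ℝ} (hp : IsDist p) :
    IsDist (push f p) := by
  classical
  constructor
  · intro b
    rw [push_apply]
    exact Finset.sum_nonneg fun a _ => by by_cases h : f a = b <;> simp [h, hp.1 a]
  · rw [finsum_eq_sum_of_fintype, sum_push, ← finsum_eq_sum_of_fintype]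
    exact hp.2

lemma isDist_sum_eq [Fintype A] {p : A → ℝ} (hp : IsDist p) : ∑ a, p a = 1 := by
  rw [← finsum_eq_sum_of_fintype]; exact hp.2

lemma isDist_le_one [Fintype A] {p : A → ℝ} (hp : IsDist p) (a : A) : p a ≤ 1 := by
  rw [← isDist_sum_eq hp]
  exact Finset.single_le_sum (fun i _ => hp.1 i) (Finset.mem_univ a)

lemma ent_nonneg [Fintype A] {p : A → ℝ} (hp : IsDist p) : 0 ≤ ent p := by
  rw [ent_eq_sum]
  exact Finset.sum_nonneg fun a _ => Real.negMulLog_nonneg (hp.1 a) (isDist_le_one hp a)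

lemma negMulLog_sum_le {s : Finset C} {f : C → ℝ} (hf : ∀ i ∈ s, 0 ≤ f i) :
    Real.negMulLog (∑ i ∈ s, f i) ≤ ∑ i ∈ s, Real.negMulLog (f i) := by
  have h1 : ∑ i ∈ s, -(f i * Real.log (∑ j ∈ s, f j)) = Real.negMulLog (∑ i ∈ s, f i) := by
    rw [Finset.sum_neg_distrib, ← Finset.sum_mul]
    simp [Real.negMulLog, neg_mul]
  rw [← h1]
  refine Finset.sum_le_sum fun i hi => ?_
  rcases eq_or_lt_of_le (hf i hi) with h | h
  · simp [← h, Real.negMulLog]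
  · rw [Real.negMulLog, neg_mul]
    refine neg_le_neg ?_
    refine mul_le_mul_of_nonneg_left ?_ (hf i hi)
    exact Real.log_le_log h (Finset.single_le_sum hf hi)

lemma ent_push_le [Fintype A] [Fintype B] (f : A → B) {p : A → ℝ} (hp : IsDist p) :
    ent (push f p) ≤ ent p := by
  classical
  rw [ent_eq_sum, ent_eq_sum]
  calc ∑ b, Real.negMulLog (push f p b)
      ≤ ∑ b, ∑ a ∈ Finset.univ.filter (fun a => f a = b), Real.negMulLog (p a) := by
        refine Finset.sum_le_sum fun b _ => ?_
        rw [push_apply, ← Finset.sum_filter]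
        exact negMulLog_sum_le (fun i _ => hp.1 i)
    _ = ∑ a, Real.negMulLog (p a) := by
        simp_rw [Finset.sum_filter]
        rw [Finset.sum_comm]
        simp

lemma ent_push_of_injective [Fintype A] [Fintype B] (f : A → B) (hf : Function.Injective f)
    (p : A → ℝ) : ent (push f p) = ent p := by
  classical
  rw [ent_eq_sum, ent_eq_sum]
  rw [← Finset.sum_subset (Finset.subset_univ (Finset.univ.image f)) (fun b _ hb => ?_)]
  · rw [Finset.sum_image (fun a _ a' _ h => hf h)]
    refine Finset.sum_congr rfl fun a _ => ?_
    congr 1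
    rw [push_apply]
    rw [Finset.sum_eq_single a (fun a' _ h => by
      have : f a' ≠ f a := fun he => h (hf he)
      simp [this]) (by simp)]
    simp
  · have h0 : push f p b = 0 := by
      rw [push_apply]
      refine Finset.sum_eq_zero fun a _ => ?_
      have : f a ≠ b := fun h => hb (Finset.mem_image.2 ⟨a, Finset.mem_univ a, h⟩)
      simp [this]
    rw [h0, Real.negMulLog_zero]

lemma push_push [Fintype A] [Fintype B] (f : A → B) (g : B → C) (p : A → ℝ) :
    push g (push f p) = push (g ∘ f) p := by
  classical
  funext c
  simp only [push_apply]
  have h1 : ∀ b : B, (if g b = c then (∑ a, if f a = b then p a else 0) else 0)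
      = ∑ a, if g b = c then (if f a = b then p a else 0) else 0 := by
    intro b
    split
    · rfl
    · simp
  simp_rw [h1]
  rw [Finset.sum_comm]
  refine Finset.sum_congr rfl fun a _ => ?_
  rw [Finset.sum_congr rfl (fun b _ => show (if g b = c then (if f a = b then p a else 0) else 0)
      = (if f a = b then (if g b = c then p a else 0) else 0) by split_ifs <;> rfl)]
  rw [Finset.sum_ite_eq]
  simp

end Stmt15Aux
section Stmt15Aux2

variable {A B : Type*}

lemma conv_apply [AddGroup A] [Fintype A] (p q : A → ℝ) (z : A) :
    conv p q z = ∑ x, p x * q (z - x) := finsum_eq_sum_of_fintype _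

lemma conv_comm [AddCommGroup A] [Fintype A] (p q : A → ℝ) : conv p q = conv q p := by
  funext z
  rw [conv_apply, conv_apply]
  refine Fintype.sum_equiv (Equiv.subLeft z) _ _ fun x => ?_
  simp [sub_sub_cancel, mul_comm]

lemma conv_assoc [AddCommGroup A] [Fintype A] (p q r : A → ℝ) :
    conv (conv p q) r = conv p (conv q r) := by
  funext z
  rw [conv_apply, conv_apply]
  simp_rw [conv_apply, Finset.sum_mul, Finset.mul_sum]
  rw [Finset.sum_comm]
  refine Finset.sum_congr rfl fun x _ => ?_
  refine Fintype.sum_equiv (Equiv.subRight x) _ _ fun y => ?_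
  have h : z - x - (y - x) = z - y := by abel
  simp [h, mul_assoc]

lemma isDist_conv [AddCommGroup A] [Fintype A] {p q : A → ℝ} (hp : IsDist p) (hq : IsDist q) :
    IsDist (conv p q) := by
  constructor
  · intro z
    rw [conv_apply]
    exact Finset.sum_nonneg fun x _ => mul_nonneg (hp.1 x) (hq.1 _)
  · rw [finsum_eq_sum_of_fintype]
    simp_rw [conv_apply]
    rw [Finset.sum_comm]
    have h : ∀ x : A, ∑ z, p x * q (z - x) = p x := by
      intro x
      rw [← Finset.mul_sum]
      have h2 : ∑ z, q (z - x) = 1 := by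
        rw [show (∑ z, q (z - x)) = ∑ z, q z from
          Fintype.sum_equiv (Equiv.subRight x) _ _ fun z => rfl]
        exact isDist_sum_eq hq
      rw [h2, mul_one]
    rw [Finset.sum_congr rfl fun x _ => h x]
    exact isDist_sum_eq hp

lemma conv_eq_push_add [AddCommGroup A] [Fintype A] (p q : A → ℝ) :
    conv p q = push (fun z : A × A => z.1 + z.2) (prodDist p q) := by
  classical
  funext z
  rw [conv_apply, push_apply, Fintype.sum_prod_type]
  refine Finset.sum_congr rfl fun x _ => ?_
  have hco : ∀ y : A, (x + y = z) ↔ (y = z - x) := fun y => by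
    rw [eq_sub_iff_add_eq, add_comm]
  simp only [hco]
  rw [Finset.sum_ite_eq' Finset.univ (z - x) (fun y => prodDist p q (x, y))]
  simp [prodDist]

lemma isDist_prodDist [Fintype A] [Fintype B] {p : A → ℝ} {q : B → ℝ}
    (hp : IsDist p) (hq : IsDist q) : IsDist (prodDist p q) := by
  constructor
  · exact fun z => mul_nonneg (hp.1 z.1) (hq.1 z.2)
  · rw [finsum_eq_sum_of_fintype, Fintype.sum_prod_type]
    simp_rw [prodDist, ← Finset.mul_sum]
    rw [← Finset.sum_mul, isDist_sum_eq hp, isDist_sum_eq hq, one_mul]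

lemma ent_prodDist [Fintype A] [Fintype B] {p : A → ℝ} {q : B → ℝ}
    (hp : IsDist p) (hq : IsDist q) : ent (prodDist p q) = ent p + ent q := by
  rw [ent_eq_sum, ent_eq_sum, ent_eq_sum, Fintype.sum_prod_type]
  have h : ∀ (a : A) (b : B), Real.negMulLog (prodDist p q (a, b))
      = q b * Real.negMulLog (p a) + p a * Real.negMulLog (q b) := fun a b =>
    Real.negMulLog_mul _ _
  simp_rw [h, Finset.sum_add_distrib, ← Finset.sum_mul, ← Finset.mul_sum,
    isDist_sum_eq hq, one_mul]
  rw [← Finset.sum_mul, isDist_sum_eq hp, one_mul]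

lemma ent_conv_le [AddCommGroup A] [Fintype A] {p q : A → ℝ} (hp : IsDist p) (hq : IsDist q) :
    ent (conv p q) ≤ ent p + ent q := by
  classical
  rw [conv_eq_push_add, ← ent_prodDist hp hq]
  exact ent_push_le _ (isDist_prodDist hp hq)

lemma ent_le_ent_conv_right [AddCommGroup A] [Fintype A] {p q : A → ℝ}
    (hp : IsDist p) (hq : ∀ a, 0 ≤ q a) : ent q ≤ ent (conv p q) := by
  classical
  rw [ent_eq_sum, ent_eq_sum]
  have key : ∀ z, ∑ x, p x * Real.negMulLog (q (z - x)) ≤ Real.negMulLog (conv p q z) := by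
    intro z
    rw [conv_apply]
    have h := Real.concaveOn_negMulLog.le_map_sum (t := Finset.univ) (w := p)
      (p := fun x => q (z - x)) (fun i _ => hp.1 i) (isDist_sum_eq hp) (fun i _ => hq _)
    simpa [smul_eq_mul] using h
  calc ∑ z, Real.negMulLog (q z)
      = ∑ x, p x * ∑ z, Real.negMulLog (q z) := by
        rw [← Finset.sum_mul, isDist_sum_eq hp, one_mul]
    _ = ∑ x, ∑ z, p x * Real.negMulLog (q (z - x)) := by
        refine Finset.sum_congr rfl fun x _ => ?_
        rw [Finset.mul_sum]
        exact (Fintype.sum_equiv (Equiv.subRight x)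
          (fun z => p x * Real.negMulLog (q (z - x)))
          (fun z => p x * Real.negMulLog (q z)) (fun z => rfl)).symm
    _ = ∑ z, ∑ x, p x * Real.negMulLog (q (z - x)) := Finset.sum_comm
    _ ≤ ∑ z, Real.negMulLog (conv p q z) := Finset.sum_le_sum fun z _ => key z

lemma ent_le_ent_conv_left [AddCommGroup A] [Fintype A] {p q : A → ℝ}
    (hp : ∀ a, 0 ≤ p a) (hq : IsDist q) : ent p ≤ ent (conv p q) := by
  rw [conv_comm]
  exact ent_le_ent_conv_right hq hp

lemma push_conv [AddCommGroup A] [AddCommGroup B] [Fintype A] [Fintype B] (f : A → B)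
    (hf : ∀ x y, f (x + y) = f x + f y) (p q : A → ℝ) :
    push f (conv p q) = conv (push f p) (push f q) := by
  classical
  funext b
  have hiff : ∀ x y : A, (f (x + y) = b) ↔ (f y = b - f x) := fun x y => by
    rw [hf, add_comm, ← eq_sub_iff_add_eq]
  have hL : push f (conv p q) b = ∑ x, ∑ y, if f y = b - f x then p x * q y else 0 := by
    rw [push_apply]
    simp_rw [conv_apply]
    have h1 : ∀ a : A, (if f a = b then (∑ x, p x * q (a - x)) else 0)
        = ∑ x, if f a = b then p x * q (a - x) else 0 := by
      intro a
      split
      · rfl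
      · simp
    simp_rw [h1]
    rw [Finset.sum_comm]
    refine Finset.sum_congr rfl fun x _ => ?_
    rw [show (∑ a, if f a = b then p x * q (a - x) else 0)
        = ∑ y, if f (x + y) = b then p x * q (x + y - x) else 0 from
      (Fintype.sum_equiv (Equiv.addLeft x) _ _ fun y => rfl).symm]
    simp_rw [add_sub_cancel_left, hiff]
  have hR : conv (push f p) (push f q) b = ∑ x, ∑ y, if f y = b - f x then p x * q y else 0 := by
    rw [conv_apply]
    simp_rw [push_apply, Finset.sum_mul, ite_mul, zero_mul]
    rw [Finset.sum_comm]
    have h2 : ∀ x : A, (∑ c, if f x = c then p x * (∑ y, if f y = b - c then q y else 0) else 0)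
        = p x * (∑ y, if f y = b - f x then q y else 0) := by
      intro x
      rw [Finset.sum_ite_eq]
      simp
    simp_rw [h2, Finset.mul_sum, mul_ite, mul_zero]
  rw [hL, hR]

end Stmt15Aux2
section Stmt15Aux3

variable {A : Type*}

lemma ent_unifOn_set [Fintype A] (s : Set A) (hs : s.Nonempty) :
    ent (unifOn s) = Real.log (Nat.card s) := by
  classical
  rw [ent_eq_sum]
  rw [Nat.card_eq_card_toFinset]
  set N : ℕ := s.toFinset.card with hN
  have hNpos : 0 < N := by
    rw [hN, Finset.card_pos, Set.toFinset_nonempty]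
    exact hs
  have hNne : (N : ℝ) ≠ 0 := Nat.cast_ne_zero.2 hNpos.ne'
  have h1 : ∀ a ∈ s.toFinset, Real.negMulLog (unifOn s a) = (N : ℝ)⁻¹ * Real.log N := by
    intro a ha
    rw [unifOn, Set.indicator_of_mem (Set.mem_toFinset.1 ha)]
    rw [show ((Nat.card ↥s : ℝ))⁻¹ = (N : ℝ)⁻¹ by rw [Nat.card_eq_card_toFinset]]
    rw [Real.negMulLog, Real.log_inv]
    ring
  rw [← Finset.sum_subset (Finset.subset_univ s.toFinset) (fun a _ ha => by
      rw [unifOn, Set.indicator_of_notMem (by simpa [Set.mem_toFinset] using ha),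
        Real.negMulLog_zero])]
  rw [Finset.sum_congr rfl h1, Finset.sum_const, nsmul_eq_mul, ← hN]
  field_simp

lemma ent_unifOn_sub {k : ℕ} (V : Submodule (ZMod 2) (Fvec k)) :
    ent (unifOn (V : Set (Fvec k))) = Real.log (Nat.card V) :=
  ent_unifOn_set _ ⟨0, V.zero_mem⟩

lemma card_comap_eq {n m : ℕ} (φ : Fvec n →ₗ[ZMod 2] Fvec m)
    (hφ : Function.Surjective φ) (W : Submodule (ZMod 2) (Fvec m)) :
    Nat.card (Submodule.comap φ W) = Nat.card (LinearMap.ker φ) * Nat.card W := by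
  obtain ⟨σ, hσ⟩ := φ.exists_rightInverse_of_surjective (LinearMap.range_eq_top.2 hφ)
  have hσ' : ∀ w, φ (σ w) = w := fun w => by
    have := LinearMap.ext_iff.1 hσ w
    simpa using this
  have e : (LinearMap.ker φ × W) ≃ (Submodule.comap φ W) :=
  { toFun := fun vw => ⟨(vw.1 : Fvec n) + σ vw.2, by
      have h1 : φ (vw.1 : Fvec n) = 0 := LinearMap.mem_ker.1 vw.1.2
      simp [Submodule.mem_comap, map_add, h1, hσ', vw.2.2]⟩
    invFun := fun x => (⟨(x : Fvec n) - σ (φ x), by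
        simp [LinearMap.mem_ker, map_sub, hσ']⟩,
      ⟨φ (x : Fvec n), x.2⟩)
    left_inv := fun vw => by
      have h1 : φ (vw.1 : Fvec n) = 0 := LinearMap.mem_ker.1 vw.1.2
      ext
      · simp [map_add, h1, hσ']
      · simp [map_add, h1, hσ']
    right_inv := fun x => by
      ext
      simp }
  rw [← Nat.card_congr e, Nat.card_prod]

lemma ent_push_mkQ_mono {k : ℕ} {V V₁ : Submodule (ZMod 2) (Fvec k)} (h : V ≤ V₁)
    {r : Fvec k → ℝ} (hr : IsDist r) :
    ent (push V₁.mkQ r) ≤ ent (push V.mkQ r) := by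
  classical
  letI : Fintype (Fvec k ⧸ V) := Fintype.ofFinite _
  letI : Fintype (Fvec k ⧸ V₁) := Fintype.ofFinite _
  have hle : V ≤ LinearMap.ker V₁.mkQ := by rw [Submodule.ker_mkQ]; exact h
  have hfac : ⇑V₁.mkQ = ⇑(V.liftQ V₁.mkQ hle) ∘ ⇑V.mkQ := by
    rw [← LinearMap.coe_comp, Submodule.liftQ_mkQ]
  rw [hfac, ← push_push]
  exact ent_push_le _ (isDist_push _ hr)

lemma ent_push_comap {n m : ℕ} (φ : Fvec n →ₗ[ZMod 2] Fvec m)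
    (W : Submodule (ZMod 2) (Fvec m)) (r : Fvec n → ℝ) :
    ent (push (Submodule.comap φ W).mkQ r) = ent (push W.mkQ (push φ r)) := by
  classical
  letI : Fintype (Fvec n ⧸ (Submodule.comap φ W)) := Fintype.ofFinite _
  letI : Fintype (Fvec m ⧸ W) := Fintype.ofFinite _
  have hker : Submodule.comap φ W ≤ LinearMap.ker (W.mkQ ∘ₗ φ) := by
    rw [LinearMap.ker_comp, Submodule.ker_mkQ]
  have hker' : LinearMap.ker (W.mkQ ∘ₗ φ) ≤ Submodule.comap φ W := by
    rw [LinearMap.ker_comp, Submodule.ker_mkQ]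
  have hψ : Function.Injective ((Submodule.comap φ W).liftQ (W.mkQ ∘ₗ φ) hker) :=
    LinearMap.ker_eq_bot.1 (Submodule.ker_liftQ_eq_bot _ _ _ hker')
  have h1 : ⇑W.mkQ ∘ ⇑φ
      = ⇑((Submodule.comap φ W).liftQ (W.mkQ ∘ₗ φ) hker) ∘ ⇑(Submodule.comap φ W).mkQ := by
    rw [← LinearMap.coe_comp, ← LinearMap.coe_comp, Submodule.liftQ_mkQ]
  rw [push_push, h1, ← push_push, ent_push_of_injective _ hψ]

lemma pushQ_conv {k : ℕ} (V : Submodule (ZMod 2) (Fvec k)) (r₁ r₂ : Fvec k → ℝ) :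
    push V.mkQ (conv r₁ r₂) = conv (push V.mkQ r₁) (push V.mkQ r₂) := by
  letI : Fintype (Fvec k ⧸ V) := Fintype.ofFinite _
  exact push_conv _ (fun x y => map_add _ x y) r₁ r₂

lemma isDist_pushQ {k : ℕ} (V : Submodule (ZMod 2) (Fvec k)) {r : Fvec k → ℝ} (hr : IsDist r) :
    IsDist (push V.mkQ r) := by
  letI : Fintype (Fvec k ⧸ V) := Fintype.ofFinite _
  exact isDist_push _ hr

lemma ent_pushQ_nonneg {k : ℕ} (V : Submodule (ZMod 2) (Fvec k)) {r : Fvec k → ℝ}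
    (hr : IsDist r) : 0 ≤ ent (push V.mkQ r) := by
  letI : Fintype (Fvec k ⧸ V) := Fintype.ofFinite _
  exact ent_nonneg (isDist_push _ hr)

lemma ent_pushQ_le {k : ℕ} (V : Submodule (ZMod 2) (Fvec k)) {r : Fvec k → ℝ}
    (hr : IsDist r) : ent (push V.mkQ r) ≤ ent r := by
  letI : Fintype (Fvec k ⧸ V) := Fintype.ofFinite _
  exact ent_push_le _ hr

lemma ent_pushQ_conv_left {k : ℕ} (V : Submodule (ZMod 2) (Fvec k)) {r₁ r₂ : Fvec k → ℝ}
    (h₁ : IsDist r₁) (h₂ : IsDist r₂) :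
    ent (push V.mkQ r₁) ≤ ent (push V.mkQ (conv r₁ r₂)) := by
  letI : Fintype (Fvec k ⧸ V) := Fintype.ofFinite _
  rw [pushQ_conv]
  exact ent_le_ent_conv_left (isDist_push _ h₁).1 (isDist_push _ h₂)

lemma ent_pushQ_conv_right {k : ℕ} (V : Submodule (ZMod 2) (Fvec k)) {r₁ r₂ : Fvec k → ℝ}
    (h₁ : IsDist r₁) (h₂ : IsDist r₂) :
    ent (push V.mkQ r₂) ≤ ent (push V.mkQ (conv r₁ r₂)) := by
  letI : Fintype (Fvec k ⧸ V) := Fintype.ofFinite _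
  rw [pushQ_conv]
  exact ent_le_ent_conv_right (isDist_push _ h₁) (isDist_push _ h₂).1

lemma stepB {η₀ ε₀ L₀ : ℝ} (hB : StB η₀ ε₀ L₀) {n : ℕ}
    (V : Submodule (ZMod 2) (Fvec n)) (r₁ r₂ : Fvec n → ℝ) (h₁ : IsDist r₁) (h₂ : IsDist r₂) :
    ∃ V₁ : Submodule (ZMod 2) (Fvec n), V ≤ V₁ ∧
      ent (unifOn (V₁ : Set (Fvec n))) ≤ ent (unifOn (V : Set (Fvec n)))
        + L₀ * (ent (push V.mkQ r₁) + ent (push V.mkQ r₂)) ∧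
      ent (push V₁.mkQ (conv r₁ r₂)) ≥
        (1 - η₀) * (ent (push V₁.mkQ r₁) + ent (push V₁.mkQ r₂))
          - ε₀ * (ent (push V.mkQ r₁) + ent (push V.mkQ r₂)) := by
  classical
  letI : Fintype (Fvec n ⧸ V) := Fintype.ofFinite _
  set m := Module.finrank (ZMod 2) (Fvec n ⧸ V) with hm
  let e : (Fvec n ⧸ V) ≃ₗ[ZMod 2] Fvec m := (Module.finBasis (ZMod 2) (Fvec n ⧸ V)).equivFun
  let φ : Fvec n →ₗ[ZMod 2] Fvec m := e.toLinearMap ∘ₗ V.mkQ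
  have hφco : ⇑φ = ⇑e.toLinearMap ∘ ⇑V.mkQ := LinearMap.coe_comp _ _
  have hφsurj : Function.Surjective φ := by
    rw [hφco]
    exact e.surjective.comp (Submodule.mkQ_surjective V)
  have hkerφ : LinearMap.ker φ = V := by
    rw [LinearMap.ker_comp, LinearEquiv.ker, Submodule.comap_bot, Submodule.ker_mkQ]
  have hpushr : ∀ r : Fvec n → ℝ, ent (push φ r) = ent (push V.mkQ r) := by
    intro r
    rw [hφco, ← push_push]
    simp only [LinearEquiv.coe_coe]
    exact ent_push_of_injective _ e.injective _
  obtain ⟨W, hW1, hW2⟩ := hB m (push φ r₁) (push φ r₂) (isDist_push _ h₁) (isDist_push _ h₂)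
  letI : Fintype (Fvec m ⧸ W) := Fintype.ofFinite _
  have hVle : V ≤ Submodule.comap φ W := by
    intro x hx
    have hx0 : φ x = 0 := by
      rw [hφco]
      show e (V.mkQ x) = 0
      rw [Submodule.mkQ_apply, (Submodule.Quotient.mk_eq_zero V).2 hx, map_zero]
    simp [Submodule.mem_comap, hx0, W.zero_mem]
  have hpushmain : ∀ r : Fvec n → ℝ,
      ent (push W.mkQ (push φ r)) = ent (push (Submodule.comap φ W).mkQ r) :=
    fun r => (ent_push_comap φ W r).symm
  have hconvmain : conv (push W.mkQ (push φ r₁)) (push W.mkQ (push φ r₂))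
      = push W.mkQ (push φ (conv r₁ r₂)) := by
    rw [push_push, push_push, push_push]
    exact (push_conv (⇑W.mkQ ∘ ⇑φ) (fun x y => by simp [map_add]) r₁ r₂).symm
  refine ⟨Submodule.comap φ W, hVle, ?_, ?_⟩
  · have hcard := card_comap_eq φ hφsurj W
    rw [hkerφ] at hcard
    have hV0 : (0 : ℕ) < Nat.card V := Nat.card_pos
    have hW0 : (0 : ℕ) < Nat.card W := Nat.card_pos
    rw [ent_unifOn_sub, ent_unifOn_sub, hcard, Nat.cast_mul,
      Real.log_mul (Nat.cast_ne_zero.2 hV0.ne') (Nat.cast_ne_zero.2 hW0.ne')]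
    have hWent : ent (unifOn (W : Set (Fvec m))) = Real.log (Nat.card W) := ent_unifOn_sub W
    rw [← hWent]
    have := hW1
    rw [hpushr r₁, hpushr r₂] at this
    linarith
  · have key := hW2
    rw [hconvmain, hpushmain, hpushmain, hpushmain, hpushr, hpushr] at key
    exact key
end Stmt15Aux3
section Stmt15Main

lemma main_claim {n : ℕ} {η₀ ε₀ L₀ : ℝ} (hη0 : 0 < η₀) (hη1 : η₀ ≤ 1/2) (hε0 : 0 < ε₀)
    (hL : 0 ≤ L₀) (hB : StB η₀ ε₀ L₀) (S : ℝ) (hS0 : 0 ≤ S)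
    (C : Bool → (Fvec n → ℝ) × (Fvec n → ℝ)) (D : Fvec n → ℝ)
    (hCd1 : ∀ j, IsDist (C j).1) (hCd2 : ∀ j, IsDist (C j).2)
    (hCsum : ∀ j, ent (C j).1 + ent (C j).2 ≤ 2 * S)
    (hCD : ∀ j, conv (C j).1 (C j).2 = D) :
    ∀ (k : ℕ) (V : Submodule (ZMod 2) (Fvec n)) (j : Bool),
      ent (push V.mkQ D) ≥ (1 - η₀) * (ent (push V.mkQ (C j).1) + ent (push V.mkQ (C j).2))
        - 2 * ε₀ * S →
      ent (push V.mkQ D) ≤ (4 + 2 * (k : ℝ)) * ε₀ * S →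
      ∃ V', V ≤ V' ∧
        ent (unifOn (V' : Set (Fvec n))) ≤ ent (unifOn (V : Set (Fvec n))) + 2 * L₀ * S * k ∧
        ∀ i, ent (push V'.mkQ D) ≥
          (1 - η₀) * (ent (push V'.mkQ (C i).1) + ent (push V'.mkQ (C i).2)) - 4 * ε₀ * S := by
  have hES0 : 0 ≤ ε₀ * S := mul_nonneg hε0.le hS0
  have hE0 : ∀ (V : Submodule (ZMod 2) (Fvec n)) (i : Bool),
      0 ≤ ent (push V.mkQ (C i).1) + ent (push V.mkQ (C i).2) :=
    fun V i => add_nonneg (ent_pushQ_nonneg V (hCd1 i)) (ent_pushQ_nonneg V (hCd2 i))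
  have hE2S : ∀ (V : Submodule (ZMod 2) (Fvec n)) (i : Bool),
      ent (push V.mkQ (C i).1) + ent (push V.mkQ (C i).2) ≤ 2 * S :=
    fun V i => le_trans (add_le_add (ent_pushQ_le V (hCd1 i)) (ent_pushQ_le V (hCd2 i))) (hCsum i)
  have hhalf : ∀ (V : Submodule (ZMod 2) (Fvec n)) (i : Bool),
      ent (push V.mkQ (C i).1) + ent (push V.mkQ (C i).2) ≤ 2 * ent (push V.mkQ D) := by
    intro V i
    have h1 := ent_pushQ_conv_left V (hCd1 i) (hCd2 i)
    have h2 := ent_pushQ_conv_right V (hCd1 i) (hCd2 i)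
    rw [hCD i] at h1 h2
    linarith
  have hfail : ∀ (V : Submodule (ZMod 2) (Fvec n)) (i : Bool),
      ¬ (ent (push V.mkQ D) ≥
        (1 - η₀) * (ent (push V.mkQ (C i).1) + ent (push V.mkQ (C i).2)) - 4 * ε₀ * S) →
      4 * ε₀ * S < ent (push V.mkQ D) := by
    intro V i hno
    push_neg at hno
    have h1 := hhalf V i
    have h2 := hE0 V i
    nlinarith [mul_nonneg hη0.le h2]
  intro k
  induction k with
  | zero =>
    intro V j hstrong hbound
    push_cast at hbound
    refine ⟨V, le_refl V, by simp, fun i => ?_⟩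
    by_contra hno
    have := hfail V i hno
    linarith
  | succ k ih =>
    intro V j hstrong hbound
    push_cast at hbound
    by_cases hw : ent (push V.mkQ D) ≥
        (1 - η₀) * (ent (push V.mkQ (C (!j)).1) + ent (push V.mkQ (C (!j)).2)) - 4 * ε₀ * S
    · refine ⟨V, le_refl V, ?_, fun i => ?_⟩
      · have h1 : (0:ℝ) ≤ 2 * L₀ * S * ((k:ℝ)+1) := by positivity
        push_cast
        linarith
      · by_cases hij : i = j
        · subst hij
          linarith [hstrong]
        · have hieq : i = !j := by cases i <;> cases j <;> first | rfl | exact absurd rfl hij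
          rw [hieq]
          exact hw
    · obtain ⟨V₁, hle₁, hU₁, hstr₁⟩ := stepB hB V (C (!j)).1 (C (!j)).2 (hCd1 _) (hCd2 _)
      rw [hCD] at hstr₁
      have hstrong₁ : ent (push V₁.mkQ D) ≥
          (1 - η₀) * (ent (push V₁.mkQ (C (!j)).1) + ent (push V₁.mkQ (C (!j)).2))
            - 2 * ε₀ * S := by
        have h2S := hE2S V (!j)
        have h3 := mul_le_mul_of_nonneg_left h2S hε0.le
        linarith
      have hU₁' : ent (unifOn (V₁ : Set (Fvec n))) ≤ ent (unifOn (V : Set (Fvec n)))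
          + 2 * L₀ * S := by
        have h2S := hE2S V (!j)
        have h3 := mul_le_mul_of_nonneg_left h2S hL
        linarith
      by_cases hw2 : ent (push V₁.mkQ D) ≥
          (1 - η₀) * (ent (push V₁.mkQ (C j).1) + ent (push V₁.mkQ (C j).2)) - 4 * ε₀ * S
      · refine ⟨V₁, hle₁, ?_, fun i => ?_⟩
        · have h1 : (0:ℝ) ≤ 2 * L₀ * S * (k:ℝ) := by positivity
          push_cast
          linarith
        · by_cases hij : i = j
          · subst hij
            exact hw2
          · have hieq : i = !j := by cases i <;> cases j <;> first | rfl | exact absurd rfl hij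
            rw [hieq]
            linarith [hstrong₁]
      · have hmono1 : ent (push V₁.mkQ (C j).1) ≤ ent (push V.mkQ (C j).1) :=
          ent_push_mkQ_mono hle₁ (hCd1 j)
        have hmono2 : ent (push V₁.mkQ (C j).2) ≤ ent (push V.mkQ (C j).2) :=
          ent_push_mkQ_mono hle₁ (hCd2 j)
        have hHle : ent (push V₁.mkQ D) ≤ (4 + 2 * (k:ℝ)) * ε₀ * S := by
          push_neg at hw2
          have hEjm : (1 - η₀) * (ent (push V₁.mkQ (C j).1) + ent (push V₁.mkQ (C j).2))
              ≤ (1 - η₀) * (ent (push V.mkQ (C j).1) + ent (push V.mkQ (C j).2)) :=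
            mul_le_mul_of_nonneg_left (by linarith) (by linarith)
          nlinarith
        obtain ⟨V', hle', hU', hw'⟩ := ih V₁ (!j) hstrong₁ hHle
        refine ⟨V', le_trans hle₁ hle', ?_, hw'⟩
        push_cast
        linarith

end Stmt15Main

/-- Assuming `B(η₀, ε₀, L₀)`, for independent `X ∼ p`, `Y ∼ q` there is a
subspace `V` with `H[𝐔_V] ≤ (4/ε₀) L₀ (H[X]+H[Y])` such that, with `π = π_V` and mutually
independent copies `X₁, X₂, Y₁, Y₂`:
`H[π(X₁+X₂+Y₁+Y₂)] ≥ (1−η₀)(H[π(X₁+X₂)] + H[π(Y₁+Y₂)]) − 4ε₀(H[X]+H[Y])` and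
`H[π(X₁+X₂+Y₁+Y₂)] ≥ (1−η₀)(H[π(X₁+Y₂)] + H[π(Y₁+X₂)]) − 4ε₀(H[X]+H[Y])`. -/
theorem statement15 (η₀ ε₀ L₀ : ℝ) (hη : η₀ ∈ Set.Ioc (0 : ℝ) (1 / 2))
    (hε : ε₀ ∈ Set.Ioc (0 : ℝ) 1) (hL : 0 ≤ L₀) (hB : StB η₀ ε₀ L₀)
    (n : ℕ) (p q : Fvec n → ℝ) (hp : IsDist p) (hq : IsDist q) :
    ∃ V : Submodule (ZMod 2) (Fvec n),
      ent (unifOn (V : Set (Fvec n))) ≤ 4 / ε₀ * L₀ * (ent p + ent q) ∧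
      ent (push V.mkQ (conv (conv p p) (conv q q))) ≥
        (1 - η₀) * (ent (push V.mkQ (conv p p)) + ent (push V.mkQ (conv q q))) -
          4 * ε₀ * (ent p + ent q) ∧
      ent (push V.mkQ (conv (conv p p) (conv q q))) ≥
        (1 - η₀) * (ent (push V.mkQ (conv p q)) + ent (push V.mkQ (conv q p))) -
          4 * ε₀ * (ent p + ent q) := by
  classical
  obtain ⟨hη0, hη1⟩ := hη
  obtain ⟨hε0, hε1⟩ := hε
  have hpe : 0 ≤ ent p := ent_nonneg hp
  have hqe : 0 ≤ ent q := ent_nonneg hq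
  have hS0 : 0 ≤ ent p + ent q := by linarith
  have hdA₁ : IsDist (conv p p) := isDist_conv hp hp
  have hdA₂ : IsDist (conv q q) := isDist_conv hq hq
  have hdB₁ : IsDist (conv p q) := isDist_conv hp hq
  have hdB₂ : IsDist (conv q p) := isDist_conv hq hp
  have hdD : IsDist (conv (conv p p) (conv q q)) := isDist_conv hdA₁ hdA₂
  have hDD : conv (conv p q) (conv q p) = conv (conv p p) (conv q q) := by
    rw [conv_assoc p q (conv q p), ← conv_assoc q q p, conv_comm (conv q q) p,
      ← conv_assoc p p (conv q q)]
  have heA₁ : ent (conv p p) ≤ ent p + ent p := ent_conv_le hp hp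
  have heA₂ : ent (conv q q) ≤ ent q + ent q := ent_conv_le hq hq
  have heB₁ : ent (conv p q) ≤ ent p + ent q := ent_conv_le hp hq
  have heB₂ : ent (conv q p) ≤ ent q + ent p := ent_conv_le hq hp
  -- the family of pairs
  have claim := main_claim (n := n) hη0 hη1 hε0 hL hB (ent p + ent q) hS0
    (fun j => cond j (conv p p, conv q q) (conv p q, conv q p))
    (conv (conv p p) (conv q q))
    (fun j => by cases j <;> [exact hdB₁; exact hdA₁])
    (fun j => by cases j <;> [exact hdB₂; exact hdA₂])
    (fun j => by
      cases j
      · show ent (conv p q) + ent (conv q p) ≤ 2 * (ent p + ent q)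
        linarith
      · show ent (conv p p) + ent (conv q q) ≤ 2 * (ent p + ent q)
        linarith)
    (fun j => by cases j <;> [exact hDD; rfl])
  -- initial application of B
  obtain ⟨V₀, hV₀U, hV₀2⟩ := hB n (conv p p) (conv q q) hdA₁ hdA₂
  rw [← pushQ_conv] at hV₀2
  have hstrong₀ : ent (push V₀.mkQ (conv (conv p p) (conv q q))) ≥
      (1 - η₀) * (ent (push V₀.mkQ (conv p p)) + ent (push V₀.mkQ (conv q q)))
        - 2 * ε₀ * (ent p + ent q) := by
    have h1 : ε₀ * (ent (conv p p) + ent (conv q q)) ≤ ε₀ * (2 * (ent p + ent q)) :=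
      mul_le_mul_of_nonneg_left (by linarith) hε0.le
    linarith
  set k₀ : ℕ := ⌈1 / ε₀ - 2⌉₊ with hk₀def
  have hk₁ : 1 / ε₀ - 2 ≤ (k₀ : ℝ) := Nat.le_ceil _
  have hinv0 : 0 < 1 / ε₀ := by positivity
  have hk₂ : (k₀ : ℝ) ≤ 2 / ε₀ - 1 := by
    have h2 : 2 / ε₀ = 2 * (1 / ε₀) := by ring
    rcases le_or_gt (1 / ε₀ - 2) 0 with h | h
    · have h0 : k₀ = 0 := by rw [hk₀def, Nat.ceil_eq_zero]; exact h
      rw [h0, Nat.cast_zero]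
      have h1 : (1:ℝ) ≤ 1 / ε₀ := by
        rw [le_div_iff₀ hε0]
        linarith
      linarith
    · have h3 := Nat.ceil_lt_add_one h.le
      linarith
  have hD2S : ent (conv (conv p p) (conv q q)) ≤ 2 * (ent p + ent q) := by
    have h1 := ent_conv_le hdA₁ hdA₂
    linarith
  have hH0 : ent (push V₀.mkQ (conv (conv p p) (conv q q))) ≤ 2 * (ent p + ent q) :=
    le_trans (ent_pushQ_le _ hdD) hD2S
  have hcoef : 2 ≤ (4 + 2 * (k₀ : ℝ)) * ε₀ := by
    have h4 : 1 / ε₀ * ε₀ = 1 := by field_simp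
    have h5 : 1 / ε₀ ≤ (k₀ : ℝ) + 2 := by linarith
    nlinarith [mul_le_mul_of_nonneg_right h5 hε0.le]
  have hH0' : ent (push V₀.mkQ (conv (conv p p) (conv q q)))
      ≤ (4 + 2 * (k₀ : ℝ)) * ε₀ * (ent p + ent q) := by
    nlinarith [mul_le_mul_of_nonneg_right hcoef hS0]
  obtain ⟨V', hle', hU', hw'⟩ := claim k₀ V₀ true hstrong₀ hH0'
  refine ⟨V', ?_, hw' true, hw' false⟩
  have h1 : ent (unifOn (V₀ : Set (Fvec n))) ≤ 2 * L₀ * (ent p + ent q) := by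
    have h2 : L₀ * (ent (conv p p) + ent (conv q q)) ≤ L₀ * (2 * (ent p + ent q)) :=
      mul_le_mul_of_nonneg_left (by linarith) hL
    linarith
  have h2 : (k₀ : ℝ) + 1 ≤ 2 / ε₀ := by linarith
  have h3 : 2 * L₀ * (ent p + ent q) * ((k₀ : ℝ) + 1)
      ≤ 2 * L₀ * (ent p + ent q) * (2 / ε₀) :=
    mul_le_mul_of_nonneg_left h2 (by positivity)
  have h4 : 2 * L₀ * (ent p + ent q) * (2 / ε₀) = 4 / ε₀ * L₀ * (ent p + ent q) := by
    ring
  linarith
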